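/- Let H, U, Y be complex Hilbert spaces, A₁, A₂ ∈ B(H), B ∈ B(U,H), C ∈ B(H,Y), D ∈ B(U,Y), and suppose that for a given (z,ζ) ∈ ℂ² both operators I − [[A₁,A₂],[A₂,A₁]]·diag(zI_H, ζI_H) and I − [[A₁,A₂],[A₂,A₁]]·diag(ζI_H, zI_H) on H ⊕ H are invertible. Then D + [C C]·diag(zI_H, ζI_H)·(I − [[A₁,A₂],[A₂,A₁]]·diag(zI_H, ζI_H))⁻¹·[B; B] = D + [C C]·diag(ζI_H, zI_H)·(I − [[A₁,A₂],[A₂,A₁]]·diag(ζI_H, zI_H))⁻¹·[B; B]; that is, the transfer function associated with a colligation of the symmetric block form [[A₁,A₂,B],[A₂,A₁,B],[C,C,D]] is a symmetric function of (z,ζ). -/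
import Mathlib


noncomputable section

open ContinuousLinearMap

variable {H U Y : Type*}
  [NormedAddCommGroup H] [InnerProductSpace ℂ H] [CompleteSpace H]
  [NormedAddCommGroup U] [InnerProductSpace ℂ U] [CompleteSpace U]
  [NormedAddCommGroup Y] [InnerProductSpace ℂ Y] [CompleteSpace Y]

/-- The block operator `[[A₁, A₂], [A₂, A₁]]` acting on `H ⊕ H`. -/
def symBlock (A₁ A₂ : H →L[ℂ] H) : (H × H) →L[ℂ] (H × H) :=
  (A₁.coprod A₂).prod (A₂.coprod A₁)

/-- The block diagonal operator `diag(z I_H, ζ I_H)` acting on `H ⊕ H`. -/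
def diagOp (z ζ : ℂ) : (H × H) →L[ℂ] (H × H) :=
  (z • ContinuousLinearMap.id ℂ H).prodMap (ζ • ContinuousLinearMap.id ℂ H)

/-- The transfer function
`D + [C C] ⬝ diag(zI,ζI) ⬝ (I - [[A₁,A₂],[A₂,A₁]] ⬝ diag(zI,ζI))⁻¹ ⬝ [B;B]`. -/
def symTransfer (A₁ A₂ : H →L[ℂ] H) (B : U →L[ℂ] H) (C : H →L[ℂ] Y) (D : U →L[ℂ] Y)
    (z ζ : ℂ) : U →L[ℂ] Y :=
  D + (C.coprod C) ∘L diagOp z ζ ∘L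
    Ring.inverse (1 - symBlock A₁ A₂ * diagOp z ζ) ∘L (B.prod B)

/-- If `j` is an involution and `a` is a unit, then
`Ring.inverse (j * a * j) = j * Ring.inverse a * j`. -/
lemma ring_inverse_conj {M : Type*} [MonoidWithZero M] (j a : M) (hj : j * j = 1)
    (ha : IsUnit a) : Ring.inverse (j * a * j) = j * Ring.inverse a * j := by
  obtain ⟨u, rfl⟩ := ha
  have hv1 : (j * ↑u * j) * (j * ↑u⁻¹ * j) = 1 := by
    calc (j * ↑u * j) * (j * ↑u⁻¹ * j) = j * (↑u * ((j * j) * ↑u⁻¹)) * j := by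
          simp [mul_assoc]
      _ = 1 := by rw [hj]; simp [hj]
  have hv2 : (j * ↑u⁻¹ * j) * (j * ↑u * j) = 1 := by
    calc (j * ↑u⁻¹ * j) * (j * ↑u * j) = j * (↑u⁻¹ * ((j * j) * ↑u)) * j := by
          simp [mul_assoc]
      _ = 1 := by rw [hj]; simp [hj]
  have := Ring.inverse_unit ⟨j * ↑u * j, j * ↑u⁻¹ * j, hv1, hv2⟩
  simp only [Units.inv_mk] at this
  rw [this, Ring.inverse_unit]

/-- The swap operator on `H × H`. -/
def swapOp : (H × H) →L[ℂ] (H × H) :=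
  (ContinuousLinearMap.snd ℂ H H).prod (ContinuousLinearMap.fst ℂ H H)

lemma swapOp_swapOp : (swapOp : (H × H) →L[ℂ] (H × H)) * swapOp = 1 := by
  ext x <;> rfl

lemma swap_symBlock (A₁ A₂ : H →L[ℂ] H) :
    swapOp * symBlock A₁ A₂ * swapOp = symBlock A₁ A₂ := by
  ext x <;> simp [swapOp, symBlock, mul_apply]

lemma swap_diagOp (z ζ : ℂ) :
    (swapOp : (H × H) →L[ℂ] (H × H)) * diagOp z ζ * swapOp = diagOp ζ z := by
  ext x <;> simp [swapOp, diagOp, mul_apply]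

lemma coprod_swap (C : H →L[ℂ] Y) : (C.coprod C) ∘L (swapOp : (H × H) →L[ℂ] (H × H)) = C.coprod C := by
  ext x <;> simp [swapOp]

lemma swap_prod (B : U →L[ℂ] H) : (swapOp : (H × H) →L[ℂ] (H × H)) ∘L (B.prod B) = B.prod B := by
  ext x <;> simp [swapOp]

theorem symmetric_colligation_transfer_is_symmetric (A₁ A₂ : H →L[ℂ] H) (B : U →L[ℂ] H)
    (C : H →L[ℂ] Y) (D : U →L[ℂ] Y) (z ζ : ℂ)
    (h₁ : IsUnit (1 - symBlock A₁ A₂ * diagOp z ζ))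
    (h₂ : IsUnit (1 - symBlock A₁ A₂ * diagOp ζ z)) :
    symTransfer A₁ A₂ B C D z ζ = symTransfer A₁ A₂ B C D ζ z := by
  have hJ : (swapOp : (H × H) →L[ℂ] (H × H)) * swapOp = 1 := swapOp_swapOp
  have hconj : (1 : (H × H) →L[ℂ] (H × H)) - symBlock A₁ A₂ * diagOp ζ z =
      swapOp * (1 - symBlock A₁ A₂ * diagOp z ζ) * swapOp := by
    ext x <;>
      simp [swapOp, symBlock, diagOp, mul_apply, sub_apply, smul_smul, mul_comm, map_add]
  have hinv : Ring.inverse ((1 : (H × H) →L[ℂ] (H × H)) - symBlock A₁ A₂ * diagOp ζ z) =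
      swapOp * Ring.inverse (1 - symBlock A₁ A₂ * diagOp z ζ) * swapOp := by
    rw [hconj]
    exact ring_inverse_conj _ _ hJ h₁
  unfold symTransfer
  congr 1
  have hd : diagOp ζ z = (swapOp : (H × H) →L[ℂ] (H × H)) * diagOp z ζ * swapOp :=
    (swap_diagOp z ζ).symm
  rw [hinv, hd]
  -- reduce to associativity plus absorption of swaps
  have : ∀ (X : (H × H) →L[ℂ] (H × H)),
      (C.coprod C) ∘L (swapOp * diagOp z ζ * swapOp) ∘L
        (swapOp * X * swapOp) ∘L (B.prod B) =
      (C.coprod C) ∘L diagOp z ζ ∘L X ∘L (B.prod B) := by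
    intro X
    calc (C.coprod C) ∘L (swapOp * diagOp z ζ * swapOp) ∘L
          (swapOp * X * swapOp) ∘L (B.prod B)
        = ((C.coprod C) ∘L swapOp) ∘L diagOp z ζ ∘L ((swapOp * swapOp) ∘L
            (X ∘L (swapOp ∘L (B.prod B)))) := by
          simp only [mul_def, comp_assoc]
      _ = (C.coprod C) ∘L diagOp z ζ ∘L X ∘L (B.prod B) := by
          rw [coprod_swap, hJ, swap_prod]; simp only [one_def, id_comp]
  exact (this _).symm
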